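/- arXiv:2201.10285 — 4 statements merged into one kernel-verified Lean document; each statement's English description precedes it below -/
import Mathlib

section
/- Minimizers of ‖M − R⊗S‖_F over pairs (R,S) coincide with minimizers of the rank-one approximation problem ‖Z(M) − vec(R)vec(S)ᵀ‖_F, i.e., (R,S) minimizes the first objective if and only if (vec(R), vec(S)) minimizes the second. -/
/-! `Zig` only permutes entries, so it preserves the Frobenius norm, and it is linear with
`Zig (R ⊗ₖ S) = vecMulVec (vecc R) (vecc S)`. Hence both objectives take the same value at
`(R, S)` and `(vecc R, vecc S)`, and `vecc` is onto, so the two minimization problems range over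
the same values. -/

open Matrix Kronecker BigOperators

/-- Frobenius norm of a real matrix. -/
noncomputable def frob {m n : Type*} [Fintype m] [Fintype n] (M : Matrix m n ℝ) : ℝ :=
  Real.sqrt (∑ i, ∑ j, (M i j) ^ 2)

/-- Column-stacking vectorization: `vecc M (j, i) = M i j`. -/
def vecc {m n : Type*} (M : Matrix m n ℝ) : n × m → ℝ := fun p => M p.2 p.1

/-- MAT, the inverse of the column-stacking `vecc`. -/
def matify {m n : Type*} (v : n × m → ℝ) : Matrix m n ℝ :=
  Matrix.of fun i j => v (j, i)

/-- Zigzag rearrangement operator: the row indexed by the block position `(ν, μ)`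
of `Zig M` is the transposed vectorization of the block `M_{μ,ν}`. -/
def Zig {d d' : Type*} (M : Matrix (d × d') (d × d') ℝ) :
    Matrix (d × d) (d' × d') ℝ :=
  Matrix.of fun p q => M (p.2, q.2) (p.1, q.1)

section

variable {d d' : Type*}

theorem vecc_matify (v : d' × d → ℝ) : vecc (matify v) = v := rfl

theorem vecc_surjective : Function.Surjective (vecc : Matrix d d' ℝ → d' × d → ℝ) :=
  fun v => ⟨matify v, vecc_matify v⟩

theorem Zig_sub (A B : Matrix (d × d') (d × d') ℝ) : Zig (A - B) = Zig A - Zig B := rfl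

theorem Zig_kronecker (R : Matrix d d ℝ) (S : Matrix d' d' ℝ) :
    Zig (R ⊗ₖ S) = vecMulVec (vecc R) (vecc S) := by
  ext p q
  simp [Zig, vecMulVec, vecc, kroneckerMap_apply]

theorem frob_Zig [Fintype d] [Fintype d'] (A : Matrix (d × d') (d × d') ℝ) :
    frob (Zig A) = frob A := by
  unfold frob Zig
  congr 1
  rw [← Fintype.sum_prod_type', ← Fintype.sum_prod_type']
  exact Fintype.sum_equiv ((Equiv.prodProdProdComm _ _ _ _).trans (Equiv.prodComm _ _)) _ _
    fun _ => rfl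

theorem frob_sub_kronecker [Fintype d] [Fintype d'] (M : Matrix (d × d') (d × d') ℝ)
    (R : Matrix d d ℝ) (S : Matrix d' d' ℝ) :
    frob (M - R ⊗ₖ S) = frob (Zig M - vecMulVec (vecc R) (vecc S)) := by
  rw [← Zig_kronecker, ← Zig_sub, frob_Zig]

end

theorem stmt1 (d d' : ℕ)
    (M : Matrix (Fin d × Fin d') (Fin d × Fin d') ℝ)
    (R : Matrix (Fin d) (Fin d) ℝ) (S : Matrix (Fin d') (Fin d') ℝ) :
    (∀ (R' : Matrix (Fin d) (Fin d) ℝ) (S' : Matrix (Fin d') (Fin d') ℝ),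
        frob (M - R ⊗ₖ S) ≤ frob (M - R' ⊗ₖ S')) ↔
    (∀ (x : Fin d × Fin d → ℝ) (y : Fin d' × Fin d' → ℝ),
        frob (Zig M - vecMulVec (vecc R) (vecc S)) ≤ frob (Zig M - vecMulVec x y)) := by
  simp only [vecc_surjective.forall, frob_sub_kronecker]
end

section
/- For matrices R ∈ ℝ^{d×d}, S ∈ ℝ^{d'×d'} and any vector u ∈ ℝ^{d²}, the zigzag rearrangement satisfies Z(R⊗S)ᵀu = ⟨vec(R), u⟩ vec(S). -/
open Matrix Kronecker BigOperators

theorem zig_kronecker {d d' : Type*} (R : Matrix d d ℝ) (S : Matrix d' d' ℝ) :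
    Zig (R ⊗ₖ S) = vecMulVec (vecc R) (vecc S) :=
  rfl

theorem stmt6 (d d' : ℕ)
    (R : Matrix (Fin d) (Fin d) ℝ) (S : Matrix (Fin d') (Fin d') ℝ)
    (u : Fin d × Fin d → ℝ) :
    (Zig (R ⊗ₖ S))ᵀ.mulVec u = (vecc R ⬝ᵥ u) • vecc S := by
  rw [zig_kronecker, transpose_vecMulVec, vecMulVec_mulVec, op_smul_eq_smul]
end

section
/- Let F ∈ ℝ^{d'd×d'd} be positive semi-definite, and let (A, G) with A ∈ ℝ^{d×d}, G ∈ ℝ^{d'×d'} symmetric minimize ‖F − R⊗S‖_F over all (R,S). Write A = Uᵀ D U and G = Vᵀ E V with U, V orthogonal and D, E diagonal. Then the pair (Uᵀ|D|U, Vᵀ|E|V), obtained by replacing the eigenvalues by their absolute values, is also a minimizer; in particular there exists a minimizer consisting of two positive semi-definite symmetric matrices. -/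
/-!
Conjugating by the orthogonal matrix `W = U ⊗ V` preserves the Frobenius norm and turns
`F - (Uᵀ X U) ⊗ (Vᵀ Y V)` into `W F Wᵀ - X ⊗ Y`. For `X = D`, `Y = E` the Kronecker product
`D ⊗ E` is diagonal, so replacing it by `|D| ⊗ |E| = |D ⊗ E|` changes only diagonal entries, and
since `W F Wᵀ` is positive semidefinite its diagonal is nonnegative, so each of these entries gets
no farther from the corresponding entry of `W F Wᵀ`. Hence `(Uᵀ|D|U, Vᵀ|E|V)` does at least as
well as the minimizer `(A, G)`.
-/

open Matrix Kronecker BigOperators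

section Frobenius

variable {m n : Type*} [Fintype m] [Fintype n]

lemma frob_eq_sqrt_trace (M : Matrix m n ℝ) : frob M = Real.sqrt (M * Mᵀ).trace := by
  simp [frob, Matrix.trace, Matrix.mul_apply, sq]

lemma frob_le_frob_of_sq_le {M N : Matrix m n ℝ} (h : ∀ i j, M i j ^ 2 ≤ N i j ^ 2) :
    frob M ≤ frob N :=
  Real.sqrt_le_sqrt <| Finset.sum_le_sum fun i _ => Finset.sum_le_sum fun j _ => h i j

lemma frob_transpose_mul_mul_self [DecidableEq n] {W : Matrix n n ℝ} (hW : Wᵀ * W = 1)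
    (M : Matrix n n ℝ) : frob (Wᵀ * M * W) = frob M := by
  have hW' : W * Wᵀ = 1 := mul_eq_one_comm.mp hW
  have h : (Wᵀ * M * W) * (Wᵀ * M * W)ᵀ = Wᵀ * (M * Mᵀ) * W := by
    simp only [transpose_mul, transpose_transpose, Matrix.mul_assoc, ← Matrix.mul_assoc W Wᵀ,
      hW', Matrix.one_mul]
  rw [frob_eq_sqrt_trace, frob_eq_sqrt_trace, h, trace_mul_cycle, ← Matrix.mul_assoc, hW',
    Matrix.one_mul]

lemma frob_sub_map_abs_le {M K : Matrix n n ℝ} (hM : ∀ i, 0 ≤ M i i) (hK : K.IsDiag) :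
    frob (M - K.map abs) ≤ frob (M - K) := by
  refine frob_le_frob_of_sq_le fun i j => ?_
  simp only [Matrix.sub_apply, map_apply]
  rcases eq_or_ne i j with rfl | hij
  · nlinarith [hM i, le_abs_self (K i i), sq_abs (K i i)]
  · simp [hK hij]

end Frobenius

section Kronecker

lemma map_abs_kronecker_map_abs {m n : Type*} (D : Matrix m m ℝ) (E : Matrix n n ℝ) :
    D.map abs ⊗ₖ E.map abs = (D ⊗ₖ E).map abs := by
  ext i j
  simp [abs_mul]

variable {m n : Type*} [Fintype m] [Fintype n] [DecidableEq m] [DecidableEq n]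

lemma kronecker_transpose_mul_self {U : Matrix m m ℝ} {V : Matrix n n ℝ} (hU : Uᵀ * U = 1)
    (hV : Vᵀ * V = 1) : (U ⊗ₖ V)ᵀ * (U ⊗ₖ V) = 1 := by
  rw [← kroneckerMap_transpose, ← mul_kronecker_mul, hU, hV, one_kronecker_one]

lemma frob_sub_kronecker_conj {U : Matrix m m ℝ} {V : Matrix n n ℝ} (hU : Uᵀ * U = 1)
    (hV : Vᵀ * V = 1) (F : Matrix (m × n) (m × n) ℝ) (X : Matrix m m ℝ) (Y : Matrix n n ℝ) :
    frob (F - (Uᵀ * X * U) ⊗ₖ (Vᵀ * Y * V)) =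
      frob ((U ⊗ₖ V) * F * (U ⊗ₖ V)ᵀ - X ⊗ₖ Y) := by
  set W := U ⊗ₖ V
  have hW := kronecker_transpose_mul_self hU hV
  have hconj : Wᵀ * (W * F * Wᵀ - X ⊗ₖ Y) * W = F - (Uᵀ * X * U) ⊗ₖ (Vᵀ * Y * V) := by
    have hF : Wᵀ * (W * F * Wᵀ) * W = F := by
      rw [Matrix.mul_assoc, Matrix.mul_assoc, hW, Matrix.mul_one, ← Matrix.mul_assoc, hW,
        Matrix.one_mul]
    rw [Matrix.mul_sub, Matrix.sub_mul, hF, ← kroneckerMap_transpose, mul_kronecker_mul,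
      mul_kronecker_mul]
  rw [← hconj, frob_transpose_mul_mul_self hW]

lemma posSemidef_transpose_mul_map_abs_mul {D : Matrix m m ℝ} (hD : D.IsDiag) (U : Matrix m m ℝ) :
    (Uᵀ * D.map abs * U).PosSemidef := by
  have hdiag : D.map abs = diagonal fun i => |D i i| := by
    rw [← (hD.map abs_zero).diagonal_diag]
    rfl
  rw [hdiag, ← conjTranspose_eq_transpose_of_trivial]
  exact (PosSemidef.diagonal fun i => abs_nonneg (D i i)).conjTranspose_mul_mul_same U

lemma frob_sub_kronecker_conj_map_abs_le {F : Matrix (m × n) (m × n) ℝ} (hF : F.PosSemidef)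
    {U D : Matrix m m ℝ} {V E : Matrix n n ℝ} (hU : Uᵀ * U = 1) (hV : Vᵀ * V = 1)
    (hD : D.IsDiag) (hE : E.IsDiag) :
    frob (F - (Uᵀ * D.map abs * U) ⊗ₖ (Vᵀ * E.map abs * V)) ≤
      frob (F - (Uᵀ * D * U) ⊗ₖ (Vᵀ * E * V)) := by
  rw [frob_sub_kronecker_conj hU hV, frob_sub_kronecker_conj hU hV, map_abs_kronecker_map_abs]
  have hM := hF.mul_mul_conjTranspose_same (U ⊗ₖ V)
  rw [conjTranspose_eq_transpose_of_trivial] at hM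
  exact frob_sub_map_abs_le (fun i => hM.diag_nonneg) (hD.kronecker hE)

end Kronecker

theorem stmt9_general (d d' : ℕ)
    (F : Matrix (Fin d × Fin d') (Fin d × Fin d') ℝ) (hF : F.PosSemidef)
    (A U D : Matrix (Fin d) (Fin d) ℝ)
    (G V E : Matrix (Fin d') (Fin d') ℝ)
    (hU : Uᵀ * U = 1) (hV : Vᵀ * V = 1)
    (hD : D.IsDiag) (hE : E.IsDiag)
    (hA : A = Uᵀ * D * U) (hG : G = Vᵀ * E * V)
    (hmin : ∀ (R : Matrix (Fin d) (Fin d) ℝ) (S : Matrix (Fin d') (Fin d') ℝ),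
      frob (F - A ⊗ₖ G) ≤ frob (F - R ⊗ₖ S)) :
    (∀ (R : Matrix (Fin d) (Fin d) ℝ) (S : Matrix (Fin d') (Fin d') ℝ),
      frob (F - (Uᵀ * (Matrix.of fun i j => |D i j|) * U) ⊗ₖ
                (Vᵀ * (Matrix.of fun i j => |E i j|) * V)) ≤ frob (F - R ⊗ₖ S)) ∧
    (∃ (A' : Matrix (Fin d) (Fin d) ℝ) (G' : Matrix (Fin d') (Fin d') ℝ),
      A'.PosSemidef ∧ G'.PosSemidef ∧
      ∀ (R : Matrix (Fin d) (Fin d) ℝ) (S : Matrix (Fin d') (Fin d') ℝ),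
        frob (F - A' ⊗ₖ G') ≤ frob (F - R ⊗ₖ S)) := by
  subst hA hG
  have habs_min : ∀ R S, frob (F - (Uᵀ * D.map abs * U) ⊗ₖ (Vᵀ * E.map abs * V)) ≤
      frob (F - R ⊗ₖ S) := fun R S =>
    (frob_sub_kronecker_conj_map_abs_le hF hU hV hD hE).trans (hmin R S)
  exact ⟨habs_min, _, _, posSemidef_transpose_mul_map_abs_mul hD U,
    posSemidef_transpose_mul_map_abs_mul hE V, habs_min⟩

theorem stmt9 (d d' : ℕ)
    (F : Matrix (Fin d × Fin d') (Fin d × Fin d') ℝ) (hF : F.PosSemidef)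
    (A U D : Matrix (Fin d) (Fin d) ℝ)
    (G V E : Matrix (Fin d') (Fin d') ℝ)
    (hAsymm : A.IsSymm) (hGsymm : G.IsSymm)
    (hU : Uᵀ * U = 1) (hV : Vᵀ * V = 1)
    (hD : D.IsDiag) (hE : E.IsDiag)
    (hA : A = Uᵀ * D * U) (hG : G = Vᵀ * E * V)
    (hmin : ∀ (R : Matrix (Fin d) (Fin d) ℝ) (S : Matrix (Fin d') (Fin d') ℝ),
      frob (F - A ⊗ₖ G) ≤ frob (F - R ⊗ₖ S)) :
    (∀ (R : Matrix (Fin d) (Fin d) ℝ) (S : Matrix (Fin d') (Fin d') ℝ),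
      frob (F - (Uᵀ * (Matrix.of fun i j => |D i j|) * U) ⊗ₖ
                (Vᵀ * (Matrix.of fun i j => |E i j|) * V)) ≤ frob (F - R ⊗ₖ S)) ∧
    (∃ (A' : Matrix (Fin d) (Fin d) ℝ) (G' : Matrix (Fin d') (Fin d') ℝ),
      A'.PosSemidef ∧ G'.PosSemidef ∧
      ∀ (R : Matrix (Fin d) (Fin d) ℝ) (S : Matrix (Fin d') (Fin d') ℝ),
        frob (F - A' ⊗ₖ G') ≤ frob (F - R ⊗ₖ S)) :=
  stmt9_general d d' F hF A U D G V E hU hV hD hE hA hG hmin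
end

section
/- With A, B symmetric positive definite, C, D symmetric, K₁ = A^{-1/2}E₁, K₂ = B^{-1/2}E₂, s₁ = diag(S₁), s₂ = diag(S₂) as in the simultaneous diagonalization A^{-1/2}CA^{-1/2} = E₁S₁E₁ᵀ, B^{-1/2}DB^{-1/2} = E₂S₂E₂ᵀ, and assuming all entries of 𝟙𝟙ᵀ + s₂s₁ᵀ are nonzero: for every v, the vector u = vec(K₂[(K₂ᵀ V K₁) ⊘ (𝟙𝟙ᵀ + s₂s₁ᵀ)]K₁ᵀ) with V = MAT(v) satisfies (A⊗B + C⊗D)u = v. -/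
open Matrix Kronecker BigOperators

/-- The square root `Matrix.PosSemidef.sqrt` of the older Mathlib, with its old definition. -/
noncomputable def posSemidefSqrt {n : Type*} [Fintype n] [DecidableEq n] {A : Matrix n n ℝ}
    (hA : A.PosSemidef) : Matrix n n ℝ :=
  hA.1.eigenvectorUnitary.1 * diagonal ((↑) ∘ (√·) ∘ hA.1.eigenvalues) *
    (star hA.1.eigenvectorUnitary : Matrix n n ℝ)

/-!
`K₁ = A^{-1/2} E₁` diagonalizes `A` and `C` simultaneously by congruence:
`K₁ᵀ A K₁ = 1` and `K₁ᵀ C K₁ = S₁`, and likewise `K₂` for `B` and `D`. Since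
`(A ⊗ B + C ⊗ D) vec X = vec (B X Aᵀ + D X Cᵀ)`, substituting `X = K₂ W K₁ᵀ` and
conjugating by `K₂ᵀ, K₁` turns the system into `W + S₂ W S₁ = K₂ᵀ V K₁`, which for
diagonal `S₁, S₂` is solved entrywise by the Hadamard quotient.
-/

section Congruence

variable {ι κ R : Type*} [Fintype ι] [DecidableEq ι] [Fintype κ] [DecidableEq κ] [CommRing R]

theorem mul_mul_transpose_add_eq_of_congr {A C K₁ S₁ : Matrix ι ι R}
    {B D K₂ S₂ : Matrix κ κ R} {V W : Matrix κ ι R}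
    (hA : K₁ᵀ * A * K₁ = 1) (hC : K₁ᵀ * C * K₁ = S₁)
    (hB : K₂ᵀ * B * K₂ = 1) (hD : K₂ᵀ * D * K₂ = S₂)
    (hW : W + S₂ * W * S₁ᵀ = K₂ᵀ * V * K₁) :
    B * (K₂ * W * K₁ᵀ) * Aᵀ + D * (K₂ * W * K₁ᵀ) * Cᵀ = V := by
  set Y := B * (K₂ * W * K₁ᵀ) * Aᵀ + D * (K₂ * W * K₁ᵀ) * Cᵀ
  have hK₁ : K₁ * (K₁ᵀ * A) = 1 := mul_eq_one_comm.mp hA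
  have hK₂ : B * K₂ * K₂ᵀ = 1 := mul_eq_one_comm.mp (by rwa [← Matrix.mul_assoc])
  have hY : K₂ᵀ * Y * K₁ = K₂ᵀ * V * K₁ := by
    rw [← hW]
    calc K₂ᵀ * Y * K₁
        = (K₂ᵀ * B * K₂) * W * (K₁ᵀ * A * K₁)ᵀ + (K₂ᵀ * D * K₂) * W * (K₁ᵀ * C * K₁)ᵀ := by
          simp only [Y, transpose_mul, transpose_transpose, Matrix.mul_add, Matrix.add_mul,
            Matrix.mul_assoc]
      _ = W + S₂ * W * S₁ᵀ := by
          rw [hA, hB, hC, hD, transpose_one, Matrix.one_mul, Matrix.mul_one]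
  calc Y = (B * K₂ * K₂ᵀ) * Y * (K₁ * (K₁ᵀ * A)) := by
        rw [hK₁, hK₂, Matrix.one_mul, Matrix.mul_one]
    _ = B * K₂ * (K₂ᵀ * Y * K₁) * (K₁ᵀ * A) := by simp only [Matrix.mul_assoc]
    _ = (B * K₂ * K₂ᵀ) * V * (K₁ * (K₁ᵀ * A)) := by rw [hY]; simp only [Matrix.mul_assoc]
    _ = V := by rw [hK₁, hK₂, Matrix.one_mul, Matrix.mul_one]

theorem add_mul_mul_transpose_eq_of_isDiag {S₁ : Matrix ι ι R} {S₂ : Matrix κ κ R}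
    {M W : Matrix κ ι R} (hS₁ : S₁.IsDiag) (hS₂ : S₂.IsDiag)
    (hW : ∀ i j, W i j * (1 + S₂ i i * S₁ j j) = M i j) :
    W + S₂ * W * S₁ᵀ = M := by
  ext i j
  rw [hS₁.isSymm.eq, ← hS₁.diagonal_diag, ← hS₂.diagonal_diag]
  simp only [Matrix.add_apply, diagonal_mul, mul_diagonal, diag_apply]
  linear_combination hW i j

theorem transpose_mul_mul_eq_of_inv_mul_mul_inv {P E C S : Matrix ι ι R} (hP : Pᵀ = P)
    (hE : Eᵀ * E = 1) (h : P⁻¹ * C * P⁻¹ = E * S * Eᵀ) :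
    (P⁻¹ * E)ᵀ * C * (P⁻¹ * E) = S := by
  rw [transpose_mul, transpose_nonsing_inv, hP]
  calc Eᵀ * P⁻¹ * C * (P⁻¹ * E) = Eᵀ * (P⁻¹ * C * P⁻¹) * E := by simp only [Matrix.mul_assoc]
    _ = (Eᵀ * E) * S * (Eᵀ * E) := by rw [h]; simp only [Matrix.mul_assoc]
    _ = S := by rw [hE, Matrix.one_mul, Matrix.mul_one]

theorem transpose_mul_mul_eq_one_of_mul_self {P E A : Matrix ι ι R} (hP : Pᵀ = P)
    (hPA : P * P = A) (hPdet : IsUnit P.det) (hE : Eᵀ * E = 1) :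
    (P⁻¹ * E)ᵀ * A * (P⁻¹ * E) = 1 := by
  refine transpose_mul_mul_eq_of_inv_mul_mul_inv hP hE ?_
  calc P⁻¹ * A * P⁻¹ = (P⁻¹ * P) * (P * P⁻¹) := by rw [← hPA]; simp only [Matrix.mul_assoc]
    _ = E * 1 * Eᵀ := by
      rw [nonsing_inv_mul P hPdet, mul_nonsing_inv P hPdet, Matrix.mul_one, Matrix.mul_one,
        mul_eq_one_comm.mp hE]

end Congruence

section Sqrt

variable {n : Type*} [Fintype n] [DecidableEq n]

lemma posSemidefSqrt_mul_self {A : Matrix n n ℝ} (hA : A.PosSemidef) :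
    posSemidefSqrt hA * posSemidefSqrt hA = A := by
  have hU : (star hA.1.eigenvectorUnitary : Matrix n n ℝ) * hA.1.eigenvectorUnitary.1 = 1 :=
    Unitary.coe_star_mul_self _
  have hD : diagonal ((fun x : ℝ => x) ∘ (fun x => √x) ∘ hA.1.eigenvalues) *
      diagonal ((fun x : ℝ => x) ∘ (fun x => √x) ∘ hA.1.eigenvalues)
      = diagonal (RCLike.ofReal ∘ hA.1.eigenvalues) := by
    rw [diagonal_mul_diagonal]
    congr 1
    funext i
    simp [Real.mul_self_sqrt (hA.eigenvalues_nonneg i)]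
  conv_rhs => rw [hA.1.spectral_theorem, Unitary.conjStarAlgAut_apply]
  unfold posSemidefSqrt
  rw [← hD]
  simp only [Matrix.mul_assoc]
  rw [← Matrix.mul_assoc (star _ : Matrix n n ℝ), hU, Matrix.one_mul]

lemma posSemidefSqrt_transpose {A : Matrix n n ℝ} (hA : A.PosSemidef) :
    (posSemidefSqrt hA)ᵀ = posSemidefSqrt hA := by
  rw [← conjTranspose_eq_transpose_of_trivial]
  unfold posSemidefSqrt
  have hd : star ((fun x : ℝ => x) ∘ (fun x => √x) ∘ hA.1.eigenvalues) =
      (fun x : ℝ => x) ∘ (fun x => √x) ∘ hA.1.eigenvalues := by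
    funext i; simp
  rw [conjTranspose_mul, conjTranspose_mul, diagonal_conjTranspose, hd]
  simp only [star_eq_conjTranspose, conjTranspose_conjTranspose, Matrix.mul_assoc]

lemma Matrix.PosDef.isUnit_det_posSemidefSqrt {A : Matrix n n ℝ} (hA : A.PosDef) :
    IsUnit (posSemidefSqrt hA.posSemidef).det := by
  rw [← isUnit_mul_self_iff, ← det_mul, posSemidefSqrt_mul_self]
  exact (isUnit_iff_isUnit_det A).mp hA.isUnit

end Sqrt

theorem stmt14_general (n m : ℕ)
    (A C E₁ S₁ K₁ : Matrix (Fin n) (Fin n) ℝ)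
    (B D E₂ S₂ K₂ : Matrix (Fin m) (Fin m) ℝ)
    (hA : A.PosDef) (hB : B.PosDef)
    (hE₁ : E₁ᵀ * E₁ = 1) (hE₂ : E₂ᵀ * E₂ = 1)
    (hS₁ : S₁.IsDiag) (hS₂ : S₂.IsDiag)
    (h₁ : (posSemidefSqrt hA.posSemidef)⁻¹ * C * (posSemidefSqrt hA.posSemidef)⁻¹ = E₁ * S₁ * E₁ᵀ)
    (h₂ : (posSemidefSqrt hB.posSemidef)⁻¹ * D * (posSemidefSqrt hB.posSemidef)⁻¹ = E₂ * S₂ * E₂ᵀ)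
    (hK₁ : K₁ = (posSemidefSqrt hA.posSemidef)⁻¹ * E₁)
    (hK₂ : K₂ = (posSemidefSqrt hB.posSemidef)⁻¹ * E₂)
    (hnz : ∀ (i : Fin m) (j : Fin n), 1 + S₂ i i * S₁ j j ≠ 0)
    (v : Fin n × Fin m → ℝ) :
    (A ⊗ₖ B + C ⊗ₖ D).mulVec
      (vecc (K₂ *
        (Matrix.of fun i j =>
          (K₂ᵀ * matify v * K₁) i j / (1 + S₂ i i * S₁ j j)) * K₁ᵀ)) = v := by
  have hA₁ : K₁ᵀ * A * K₁ = 1 := hK₁ ▸ transpose_mul_mul_eq_one_of_mul_self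
    (posSemidefSqrt_transpose _) (posSemidefSqrt_mul_self _) hA.isUnit_det_posSemidefSqrt hE₁
  have hB₂ : K₂ᵀ * B * K₂ = 1 := hK₂ ▸ transpose_mul_mul_eq_one_of_mul_self
    (posSemidefSqrt_transpose _) (posSemidefSqrt_mul_self _) hB.isUnit_det_posSemidefSqrt hE₂
  have hC₁ : K₁ᵀ * C * K₁ = S₁ :=
    hK₁ ▸ transpose_mul_mul_eq_of_inv_mul_mul_inv (posSemidefSqrt_transpose _) hE₁ h₁
  have hD₂ : K₂ᵀ * D * K₂ = S₂ :=
    hK₂ ▸ transpose_mul_mul_eq_of_inv_mul_mul_inv (posSemidefSqrt_transpose _) hE₂ h₂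
  have hW := add_mul_mul_transpose_eq_of_isDiag (M := K₂ᵀ * matify v * K₁)
    (W := of fun i j => (K₂ᵀ * matify v * K₁) i j / (1 + S₂ i i * S₁ j j)) hS₁ hS₂
    fun i j => div_mul_cancel₀ _ (hnz i j)
  change _ *ᵥ vec _ = vec (matify v)
  rw [add_mulVec, kronecker_mulVec_vec, kronecker_mulVec_vec, ← vec_add,
    mul_mul_transpose_add_eq_of_congr hA₁ hC₁ hB₂ hD₂ hW]

theorem stmt14 (n m : ℕ)
    (A C E₁ S₁ K₁ : Matrix (Fin n) (Fin n) ℝ)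
    (B D E₂ S₂ K₂ : Matrix (Fin m) (Fin m) ℝ)
    (hA : A.PosDef) (hB : B.PosDef) (hC : C.IsSymm) (hD : D.IsSymm)
    (hE₁ : E₁ᵀ * E₁ = 1) (hE₂ : E₂ᵀ * E₂ = 1)
    (hS₁ : S₁.IsDiag) (hS₂ : S₂.IsDiag)
    (h₁ : (posSemidefSqrt hA.posSemidef)⁻¹ * C * (posSemidefSqrt hA.posSemidef)⁻¹ = E₁ * S₁ * E₁ᵀ)
    (h₂ : (posSemidefSqrt hB.posSemidef)⁻¹ * D * (posSemidefSqrt hB.posSemidef)⁻¹ = E₂ * S₂ * E₂ᵀ)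
    (hK₁ : K₁ = (posSemidefSqrt hA.posSemidef)⁻¹ * E₁)
    (hK₂ : K₂ = (posSemidefSqrt hB.posSemidef)⁻¹ * E₂)
    (hnz : ∀ (i : Fin m) (j : Fin n), 1 + S₂ i i * S₁ j j ≠ 0)
    (v : Fin n × Fin m → ℝ) :
    (A ⊗ₖ B + C ⊗ₖ D).mulVec
      (vecc (K₂ *
        (Matrix.of fun i j =>
          (K₂ᵀ * matify v * K₁) i j / (1 + S₂ i i * S₁ j j)) * K₁ᵀ)) = v :=
  stmt14_general n m A C E₁ S₁ K₁ B D E₂ S₂ K₂ hA hB hE₁ hE₂ hS₁ hS₂ h₁ h₂ hK₁ hK₂ hnz v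
end
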